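/- arXiv:2004.05996 — 6 statements merged into one kernel-verified Lean document; each statement's English description precedes it below -/
import Mathlib

section
/- For every positive integer α, every β ∈ ℂ with Re(β) > −1, every z ∈ ℂ, and every integer n ≥ 3, the generalized Laguerre polynomial satisfies the recurrence L_n^{(α,β)}(z) = −(z/n)·L_{n−1}^{(α,β)}(z) + Σ_{m=1}^{n} (−1)^{m−1} · (α(n−1)+β)_{(m−1)α} · C_{n,m} · L_{n−m}^{(α,β)}(z), where (α(n−1)+β)_{(m−1)α} = Γ(α(n−1)+β+1)/Γ(α(n−m)+β+1). -/
open Finset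

/-- The generalized Laguerre polynomial
`L_n^{(α,β)}(z) = (Γ(αn+β+1)/n!) Σ_{k=0}^{n} ((−n)^{(k)}/Γ(αk+β+1)) z^k/k!`. -/
noncomputable def genLaguerre (α : ℕ) (β : ℂ) (n : ℕ) (z : ℂ) : ℂ :=
  Complex.Gamma ((α : ℂ) * n + β + 1) / (n.factorial : ℂ) *
    ∑ k ∈ range (n + 1),
      (∏ i ∈ range k, (-(n : ℂ) + i)) / Complex.Gamma ((α : ℂ) * k + β + 1) *
        z ^ k / (k.factorial : ℂ)

/-- `C_{n,m}(α,β) = (1/(m!·n)) Σ_{j=0}^{m} (−1)^j binom(m,j)(n−j)·(α(n−j)+β)_α`,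
where `(γ)_r = γ(γ−1)⋯(γ−r+1)` is the falling factorial. -/
noncomputable def Cnm (α : ℕ) (β : ℂ) (n m : ℕ) : ℂ :=
  1 / ((m.factorial : ℂ) * n) *
    ∑ j ∈ range (m + 1), (-1 : ℂ) ^ j * (m.choose j : ℂ) * ((n : ℂ) - j) *
      ∏ i ∈ range α, ((α : ℂ) * ((n : ℂ) - j) + β - i)

/-!
Compare the coefficients of `z ^ k`. Write `c q k` for the coefficients of `L_q`,
`Γ q = Γ(αq + β + 1)` and `w x = x (αx + β)_α`. The functional equation
`Γ (q + 1) = (α(q + 1) + β)_α Γ q` gives the coefficient `c n k * w k / w n` of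
`-(z/n) L_{n-1}` and `Γ (n - 1) / Γ (n - m) * c (n - m) k = c n k * (n - k)_m / (αn + β)_α`.
Since `(-1)^m m! n C_{n,m}` is the `m`-th forward difference at `0` of `f j = w (n - j)`,
the sum over `m` contributes `-(c n k / w n) Σ_m binom(n - k, m) Δ^m f 0`, which by the
Gregory–Newton formula is `c n k * (w n - w k) / w n`.
-/

open scoped fwdDiff

theorem sum_range_neg_one_pow_mul_choose_mul_eq_fwdDiff_iter {R : Type*} [CommRing R]
    (f : ℕ → R) (m : ℕ) :
    ∑ j ∈ range (m + 1), (-1 : R) ^ j * (m.choose j : R) * f j =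
      (-1) ^ m * (Δ_[1])^[m] f 0 := by
  rw [fwdDiff_iter_eq_sum_shift, mul_sum]
  refine sum_congr rfl fun j hj => ?_
  obtain ⟨i, rfl⟩ := Nat.exists_eq_add_of_le (mem_range_succ_iff.1 hj)
  simp only [zsmul_eq_mul, Int.cast_mul, Int.cast_pow, Int.cast_neg, Int.cast_one,
    Int.cast_natCast, zero_add, nsmul_one, Nat.cast_id, Nat.add_sub_cancel_left, pow_add]
  ring_nf
  rw [pow_mul', neg_one_sq, one_pow, mul_one]

theorem sum_Icc_choose_mul_fwdDiff_iter {R : Type*} [CommRing R] (f : ℕ → R) {N n : ℕ}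
    (hN : N ≤ n) :
    ∑ m ∈ Icc 1 n, (N.choose m : R) * (Δ_[1])^[m] f 0 = f N - f 0 := by
  have h := shift_eq_sum_fwdDiff_iter 1 f N 0
  rw [sum_subset (range_subset_range.2 (by omega : N + 1 ≤ n + 1)) fun m _ hm => by
      rw [Nat.choose_eq_zero_of_lt (by simpa using hm), zero_smul],
    sum_range_eq_add_Ico _ (by omega : 0 < n + 1), Ico_add_one_right_eq_Icc] at h
  simp only [zero_add, smul_eq_mul, mul_one, nsmul_eq_mul, Nat.choose_zero_right,
    Function.iterate_zero_apply, Nat.cast_one, one_mul] at h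
  rw [h, add_sub_cancel_left]

namespace GenLaguerre

variable (α : ℕ) (β : ℂ)

noncomputable def gammaAt (q : ℕ) : ℂ := Complex.Gamma (α * q + β + 1)

noncomputable def fallingFactor (x : ℂ) : ℂ := ∏ i ∈ range α, (α * x + β - i)

noncomputable def weight (x : ℂ) : ℂ := x * fallingFactor α β x

noncomputable def coeff (q k : ℕ) : ℂ :=
  gammaAt α β q * (∏ i ∈ range k, (-(q : ℂ) + i)) /
    (q.factorial * gammaAt α β k * k.factorial)

variable {α β}

theorem coeff_eq_zero_of_lt {q k : ℕ} (h : q < k) : coeff α β q k = 0 := by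
  rw [coeff, prod_eq_zero (mem_range.2 h) (by simp), mul_zero, zero_div]

theorem genLaguerre_eq_sum_coeff {q : ℕ} (N : ℕ) (hq : q ≤ N) (z : ℂ) :
    genLaguerre α β q z = ∑ k ∈ range (N + 1), coeff α β q k * z ^ k :=
  calc genLaguerre α β q z = ∑ k ∈ range (q + 1), coeff α β q k * z ^ k := by
        rw [genLaguerre, mul_sum]
        refine sum_congr rfl fun k _ => ?_
        rw [coeff, gammaAt, gammaAt]
        ring
    _ = ∑ k ∈ range (N + 1), coeff α β q k * z ^ k :=
        sum_subset (range_subset_range.2 (by omega)) fun k _ hk => by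
          rw [coeff_eq_zero_of_lt (by simpa using hk), zero_mul]

theorem gammaAt_arg_re_pos (hβ : -1 < β.re) (q : ℕ) : 0 < ((α : ℂ) * q + β + 1).re := by
  simp only [Complex.add_re, Complex.mul_re, Complex.natCast_re, Complex.natCast_im,
    Complex.one_re, mul_zero, sub_zero]
  nlinarith [mul_nonneg (Nat.cast_nonneg (α := ℝ) α) (Nat.cast_nonneg (α := ℝ) q)]

theorem gammaAt_ne_zero (hβ : -1 < β.re) (q : ℕ) : gammaAt α β q ≠ 0 :=
  Complex.Gamma_ne_zero_of_re_pos (gammaAt_arg_re_pos hβ q)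

theorem gammaAt_succ (hβ : -1 < β.re) (q : ℕ) :
    gammaAt α β (q + 1) = fallingFactor α β (q + 1) * gammaAt α β q := by
  set s : ℂ := α * q + β + 1
  have hs : ∀ k : ℕ, s ≠ -k := fun k h => by
    have hre : 0 < s.re := gammaAt_arg_re_pos hβ q
    rw [h] at hre
    simp only [Complex.neg_re, Complex.natCast_re, Left.neg_pos_iff] at hre
    exact (Nat.cast_nonneg k).not_gt hre
  have hpoch : fallingFactor α β (q + 1) = (ascPochhammer ℂ α).eval s := by
    rw [fallingFactor, ← descPochhammer_eval_eq_prod_range, descPochhammer_eval_eq_ascPochhammer]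
    congr 1
    ring
  rw [hpoch, ← Complex.Gamma_add_nat_div_Gamma_eq s hs, gammaAt, gammaAt,
    div_mul_cancel₀ _ (Complex.Gamma_ne_zero hs)]
  congr 1
  push_cast
  ring

theorem coeff_eq (hβ : -1 < β.re) {q k : ℕ} (h : k ≤ q) :
    coeff α β q k = (-1) ^ k * gammaAt α β q /
      ((q - k).factorial * gammaAt α β k * k.factorial) := by
  have hprod : ∏ i ∈ range k, (-(q : ℂ) + i) = (-1) ^ k * q.descFactorial k :=
    calc ∏ i ∈ range k, (-(q : ℂ) + i) = ∏ i ∈ range k, (-1) * ((q - i : ℕ) : ℂ) :=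
          prod_congr rfl fun i hi => by
            rw [Nat.cast_sub (by linarith [mem_range.1 hi])]
            ring
      _ = (-1) ^ k * q.descFactorial k := by
          rw [prod_mul_distrib, prod_const, card_range, Nat.descFactorial_eq_prod_range,
            Nat.cast_prod]
  have hfact : (q.factorial : ℂ) = (q - k).factorial * q.descFactorial k := by
    exact_mod_cast (Nat.factorial_mul_descFactorial h).symm
  have hdesc : (q.descFactorial k : ℂ) ≠ 0 := by
    exact_mod_cast (Nat.descFactorial_pos.2 h).ne'
  rw [coeff, hprod, hfact]
  field_simp [gammaAt_ne_zero hβ k, hdesc]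

theorem coeff_succ_succ_mul_weight (hβ : -1 < β.re) (q k : ℕ) :
    coeff α β (q + 1) (k + 1) * weight α β (k + 1) =
      -(fallingFactor α β (q + 1) * coeff α β q k) := by
  rcases lt_or_ge q k with h | h
  · rw [coeff_eq_zero_of_lt h, coeff_eq_zero_of_lt (by omega)]
    ring
  have hk := gammaAt_succ (α := α) hβ k
  have hk0 : fallingFactor α β (k + 1) ≠ 0 := by
    intro h0
    rw [h0, zero_mul] at hk
    exact gammaAt_ne_zero hβ _ hk
  rw [weight, coeff_eq hβ h, coeff_eq hβ (by omega), gammaAt_succ hβ q, hk,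
    Nat.succ_sub_succ, Nat.factorial_succ, pow_succ]
  push_cast
  field_simp [gammaAt_ne_zero hβ k, hk0]

theorem gammaAt_mul_coeff_sub (hβ : -1 < β.re) {q m : ℕ} (hm : m ≤ q) (k : ℕ) :
    gammaAt α β q * coeff α β (q - m) k =
      (q - k).descFactorial m * gammaAt α β (q - m) * coeff α β q k := by
  rcases lt_or_ge (q - m) k with h | h
  · have hzero : (q - k).descFactorial m = 0 ∨ q < k := by
      rw [Nat.descFactorial_eq_zero_iff_lt]
      omega
    rcases hzero with hzero | hzero <;> simp [coeff_eq_zero_of_lt, h, hzero]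
  have hfact : ((q - k).factorial : ℂ) = (q - m - k).factorial * (q - k).descFactorial m := by
    rw [show q - m - k = q - k - m by omega]
    exact_mod_cast (Nat.factorial_mul_descFactorial (by omega)).symm
  have hdesc : ((q - k).descFactorial m : ℂ) ≠ 0 := by
    exact_mod_cast (Nat.descFactorial_pos.2 (by omega)).ne'
  rw [coeff_eq hβ h, coeff_eq hβ (by omega), hfact]
  field_simp [gammaAt_ne_zero hβ k, hdesc]

theorem Cnm_eq_fwdDiff_iter (n m : ℕ) :
    Cnm α β n m =
      (-1) ^ m * (Δ_[1])^[m] (fun j : ℕ => weight α β (n - j)) 0 / (m.factorial * n) := by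
  rw [Cnm, ← sum_range_neg_one_pow_mul_choose_mul_eq_fwdDiff_iter, one_div, inv_mul_eq_div]
  simp only [weight, fallingFactor, mul_assoc]

theorem weight_ne_zero (hβ : -1 < β.re) {n : ℕ} (hn : n ≠ 0) : weight α β n ≠ 0 := by
  obtain ⟨q, rfl⟩ := Nat.exists_eq_add_one_of_ne_zero hn
  have h := gammaAt_succ (α := α) hβ q
  refine mul_ne_zero (Nat.cast_ne_zero.2 hn) fun h0 => ?_
  rw [Nat.cast_add_one] at h0
  rw [h0, zero_mul] at h
  exact gammaAt_ne_zero hβ _ h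

theorem neg_div_mul_genLaguerre_pred (hβ : -1 < β.re) {n : ℕ} (hn : n ≠ 0) (z : ℂ) :
    -(z / n) * genLaguerre α β (n - 1) z =
      ∑ k ∈ range (n + 1), coeff α β n k * (weight α β k / weight α β n) * z ^ k := by
  obtain ⟨N, rfl⟩ := Nat.exists_eq_add_one_of_ne_zero hn
  have hw := weight_ne_zero (α := α) hβ hn
  rw [Nat.add_sub_cancel, genLaguerre_eq_sum_coeff N le_rfl, mul_sum, sum_range_succ' _ (N + 1)]
  simp only [Nat.cast_zero, weight, zero_mul, zero_div, mul_zero, add_zero]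
  refine sum_congr rfl fun k _ => ?_
  push_cast at hw ⊢
  rw [← mul_div_assoc, ← weight, coeff_succ_succ_mul_weight hβ, weight] at *
  field_simp [(mul_ne_zero_iff.1 hw).2]
  ring

theorem sum_mul_genLaguerre_sub (s : Finset ℕ) (a : ℕ → ℂ) (n : ℕ) (z : ℂ) :
    ∑ m ∈ s, a m * genLaguerre α β (n - m) z =
      ∑ k ∈ range (n + 1), (∑ m ∈ s, a m * coeff α β (n - m) k) * z ^ k := by
  simp_rw [genLaguerre_eq_sum_coeff n (Nat.sub_le n _), mul_sum, sum_mul, mul_assoc]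
  exact sum_comm

theorem neg_one_pow_mul_Cnm_mul_coeff_sub (hβ : -1 < β.re) {n m : ℕ} (hm : m ≠ 0)
    (hmn : m ≤ n) (k : ℕ) :
    (-1) ^ (m - 1) * (gammaAt α β (n - 1) / gammaAt α β (n - m)) * Cnm α β n m *
        coeff α β (n - m) k =
      -(coeff α β n k / weight α β n) *
        ((n - k).choose m * (Δ_[1])^[m] (fun j : ℕ => weight α β (n - j)) 0) := by
  have hΓ : gammaAt α β n = fallingFactor α β n * gammaAt α β (n - 1) := by
    have h := gammaAt_succ (α := α) hβ (n - 1)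
    rwa [← Nat.cast_add_one, Nat.sub_add_cancel (by omega)] at h
  have h := gammaAt_mul_coeff_sub (α := α) hβ hmn k
  rw [hΓ, Nat.descFactorial_eq_factorial_mul_choose] at h
  push_cast at h
  have hsign : (-1 : ℂ) ^ (m - 1) * (-1) ^ m = -1 := by
    rw [← pow_add]
    exact Odd.neg_one_pow ⟨m - 1, by omega⟩
  obtain ⟨hn, hP⟩ := mul_ne_zero_iff.1 (weight_ne_zero (α := α) hβ (n := n) (by omega))
  have hΓm := gammaAt_ne_zero (α := α) hβ (n - m)
  have hfact : (m.factorial : ℂ) ≠ 0 := Nat.cast_ne_zero.2 m.factorial_ne_zero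
  rw [Cnm_eq_fwdDiff_iter, weight]
  field_simp
  linear_combination
    (-1) ^ (m - 1) * (-1) ^ m * (Δ_[1])^[m] (fun j : ℕ => weight α β (n - j)) 0 * h +
      (Δ_[1])^[m] (fun j : ℕ => weight α β (n - j)) 0 * m.factorial * (n - k).choose m *
        gammaAt α β (n - m) * coeff α β n k * hsign

theorem sum_Icc_Cnm_mul_coeff (hβ : -1 < β.re) {n k : ℕ} (hn : n ≠ 0) (hk : k ≤ n) :
    ∑ m ∈ Icc 1 n, (-1) ^ (m - 1) * (gammaAt α β (n - 1) / gammaAt α β (n - m)) *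
        Cnm α β n m * coeff α β (n - m) k =
      coeff α β n k * (1 - weight α β k / weight α β n) := by
  have hw := weight_ne_zero (α := α) hβ hn
  rw [sum_congr rfl fun m hm => neg_one_pow_mul_Cnm_mul_coeff_sub hβ
      (by have := (mem_Icc.1 hm).1; omega) (mem_Icc.1 hm).2 k,
    ← mul_sum, sum_Icc_choose_mul_fwdDiff_iter _ (Nat.sub_le n k)]
  simp only [Nat.cast_sub hk, sub_sub_cancel, Nat.cast_zero, sub_zero]
  field_simp
  ring

end GenLaguerre

open GenLaguerre in
theorem genLaguerre_recurrence_general (α : ℕ) (β : ℂ) (hβ : -1 < β.re)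
    (z : ℂ) (n : ℕ) (hn : 3 ≤ n) :
    genLaguerre α β n z =
      -(z / (n : ℂ)) * genLaguerre α β (n - 1) z +
        ∑ m ∈ Icc 1 n, (-1 : ℂ) ^ (m - 1) *
          (Complex.Gamma ((α : ℂ) * ((n : ℂ) - 1) + β + 1) /
            Complex.Gamma (((α * (n - m) : ℕ) : ℂ) + β + 1)) *
          Cnm α β n m * genLaguerre α β (n - m) z := by
  have hn0 : n ≠ 0 := by omega
  have hΓ : Complex.Gamma ((α : ℂ) * ((n : ℂ) - 1) + β + 1) = gammaAt α β (n - 1) := by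
    rw [gammaAt, Nat.cast_sub (by omega), Nat.cast_one]
  have hΓm (m : ℕ) :
      Complex.Gamma (((α * (n - m) : ℕ) : ℂ) + β + 1) = gammaAt α β (n - m) := by
    rw [gammaAt, Nat.cast_mul]
  simp only [hΓ, hΓm]
  rw [sum_mul_genLaguerre_sub, neg_div_mul_genLaguerre_pred hβ hn0,
    genLaguerre_eq_sum_coeff n le_rfl, ← sum_add_distrib]
  refine sum_congr rfl fun k hk => ?_
  rw [sum_Icc_Cnm_mul_coeff hβ hn0 (mem_range_succ_iff.1 hk)]
  ring

/-- Recurrence relation for the generalized Laguerre polynomials, with the falling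
factorial `(α(n−1)+β)_{(m−1)α} = Γ(α(n−1)+β+1)/Γ(α(n−m)+β+1)`. -/
theorem genLaguerre_recurrence (α : ℕ) (hα : 0 < α) (β : ℂ) (hβ : -1 < β.re)
    (z : ℂ) (n : ℕ) (hn : 3 ≤ n) :
    genLaguerre α β n z =
      -(z / (n : ℂ)) * genLaguerre α β (n - 1) z +
        ∑ m ∈ Icc 1 n, (-1 : ℂ) ^ (m - 1) *
          (Complex.Gamma ((α : ℂ) * ((n : ℂ) - 1) + β + 1) /
            Complex.Gamma (((α * (n - m) : ℕ) : ℂ) + β + 1)) *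
          Cnm α β n m * genLaguerre α β (n - m) z :=
  genLaguerre_recurrence_general α β hβ z n hn
end

section
/- Let β ∈ ℂ with Re(β) > −1 and let α = 1. Then for every integer n ≥ 1: C_{n,1}(1,β) = (2n−1+β)/n; for every integer n ≥ 2: the coefficient B_{n,2} := (n−1+β)_1·C_{n,2}(1,β) equals (n−1+β)/n, equivalently C_{n,2}(1,β) = 1/n; and for all integers m, n with n ≥ m ≥ 3: C_{n,m}(1,β) = 0. -/
open Finset

/-- `B_{n,m} = (α(n−1)+β)_{(m−1)α} · C_{n,m}`. -/
noncomputable def Bnm (α : ℕ) (β : ℂ) (n m : ℕ) : ℂ :=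
  (∏ i ∈ range ((m - 1) * α), ((α : ℂ) * ((n : ℂ) - 1) + β - i)) * Cnm α β n m

/-! For `α = 1` the summand of `C_{n,m}` is `(-1)^j binom(m,j) Q(j)` with the quadratic
`Q(x) = (n - x)(n - x + β)`. The alternating binomial sum is, up to sign, the `m`-th forward
difference of `Q` at `0`, which vanishes once `m > deg Q = 2`; the cases `m = 1, 2` are direct
computations. -/

open Polynomial

theorem Polynomial.alternating_sum_choose_mul_eval_eq_zero {R : Type*} [CommRing R] {P : R[X]}
    {m : ℕ} (hP : P.natDegree < m) :
    ∑ j ∈ range (m + 1), (-1 : R) ^ j * m.choose j * P.eval (j : R) = 0 := by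
  have hdiff := congr_fun (fwdDiff_iter_eq_zero_of_degree_lt hP) 0
  rw [fwdDiff_iter_eq_sum_shift] at hdiff
  refine (neg_one_pow_mul_eq_zero_iff (n := m)).mp ?_
  rw [mul_sum]
  refine Eq.trans (sum_congr rfl fun j hj => ?_) hdiff
  have hsq : (-1 : R) ^ j * (-1) ^ j = 1 := by rw [← mul_pow, neg_one_mul, neg_neg, one_pow]
  rw [← pow_sub_mul_pow (-1 : R) (Nat.lt_succ_iff.mp (mem_range.mp hj))]
  simp only [zsmul_eq_mul, zero_add, nsmul_one]
  push_cast
  linear_combination (-1 : R) ^ (m - j) * m.choose j * P.eval (j : R) * hsq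

lemma Cnm_one_eq_sum (β : ℂ) (n m : ℕ) :
    Cnm 1 β n m = 1 / ((m.factorial : ℂ) * n) *
      ∑ j ∈ range (m + 1), (-1 : ℂ) ^ j * m.choose j * (((n : ℂ) - j) * ((n : ℂ) - j + β)) := by
  simp only [Cnm, prod_range_one, Nat.cast_one, one_mul, Nat.cast_zero, sub_zero, mul_assoc]

theorem Cnm_alpha_one_general (β : ℂ) :
    (∀ n : ℕ, 1 ≤ n → Cnm 1 β n 1 = (2 * (n : ℂ) - 1 + β) / n) ∧
    (∀ n : ℕ, 2 ≤ n →
      Bnm 1 β n 2 = ((n : ℂ) - 1 + β) / n ∧ Cnm 1 β n 2 = 1 / (n : ℂ)) ∧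
    (∀ m n : ℕ, 3 ≤ m → m ≤ n → Cnm 1 β n m = 0) := by
  refine ⟨fun n hn => ?_, fun n hn => ?_, fun m n hm _ => ?_⟩
  · have hn0 : (n : ℂ) ≠ 0 := Nat.cast_ne_zero.mpr (by omega)
    rw [Cnm_one_eq_sum, eq_div_iff hn0]
    simp only [sum_range_succ, sum_range_zero, Nat.choose_zero_right, Nat.choose_self]
    field_simp
    push_cast
    ring
  · have hn0 : (n : ℂ) ≠ 0 := Nat.cast_ne_zero.mpr (by omega)
    have hC : Cnm 1 β n 2 = 1 / n := by
      rw [Cnm_one_eq_sum]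
      simp only [sum_range_succ, sum_range_zero, Nat.choose_zero_right, Nat.choose_self,
        Nat.choose_one_right, Nat.factorial_two]
      field_simp
      push_cast
      ring
    refine ⟨?_, hC⟩
    rw [Bnm, hC]
    simp [div_eq_mul_inv]
  · have hdeg : ((C (n : ℂ) - X) * (C (n : ℂ) - X + C β)).natDegree < m :=
      (by compute_degree : _ ≤ 2).trans_lt hm
    have hsum := alternating_sum_choose_mul_eval_eq_zero hdeg
    simp only [eval_mul, eval_add, eval_sub, eval_C, eval_X] at hsum
    rw [Cnm_one_eq_sum, hsum, mul_zero]

/-- For `α = 1`: `C_{n,1} = (2n−1+β)/n`, `B_{n,2} = (n−1+β)/n` (equivalently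
`C_{n,2} = 1/n`), and `C_{n,m} = 0` for `m ≥ 3`. -/
theorem Cnm_alpha_one (β : ℂ) (hβ : -1 < β.re) :
    (∀ n : ℕ, 1 ≤ n → Cnm 1 β n 1 = (2 * (n : ℂ) - 1 + β) / n) ∧
    (∀ n : ℕ, 2 ≤ n →
      Bnm 1 β n 2 = ((n : ℂ) - 1 + β) / n ∧ Cnm 1 β n 2 = 1 / (n : ℂ)) ∧
    (∀ m n : ℕ, 3 ≤ m → m ≤ n → Cnm 1 β n m = 0) :=
  Cnm_alpha_one_general β
end

section
/- Let α be a positive integer, β ∈ ℂ with Re(β) > −1, z ∈ ℂ, and n ≥ 1 an integer. Define the n×n complex matrix M by: M_{i,i} = B_{n+1−i,1} − z/(n+1−i) for 1 ≤ i ≤ n (diagonal); M_{i,i+1} = 1 for 1 ≤ i ≤ n−1 (superdiagonal); M_{i,j} = B_{n+1−j, i−j+1} for 1 ≤ j < i ≤ n (below the diagonal); and M_{i,j} = 0 for j > i+1. Then L_n^{(α,β)}(z) = det M. -/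
open Finset

/-!
Expanding a lower Hessenberg determinant along its first column gives
`D_n = Σ_{i<n} (-1)^i g(n,i) D_{n-1-i}`, so it suffices that `L_n = L_n^{(α,β)}(z)` satisfies
this recurrence. Write `L_p = Γ_p ℓ_p` with `Γ_p = Γ(αp+β+1)`, `ℓ_p = Σ_k a_k/(p-k)!` and
`a_k = (-z)^k/(k! Γ_k)`. Since `B_{n,m} Γ_{n-m} = Γ_{n-1} C_{n,m}` (the falling factorial in
`B_{n,m}` is a ratio of Gamma values), the recurrence becomes
`Σ_m (-1)^m C_{n,m} ℓ_{n-m} = -(z/n) ℓ_{n-1}`. Now `n m! C_{n,m}` is the `m`-th backward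
difference at `n` of `H(x) = x (αx+β)_α`, so after exchanging the two convolutions Newton's
interpolation formula collapses the left side to `(1/n) Σ_k a_k H(k)/(n-k)!`; finally
`a_k H(k) = -z a_{k-1}` because `Γ_k = (αk+β)_α Γ_{k-1}`.
-/

theorem binomial_inversion {R : Type*} [CommRing R] (g : ℕ → R) (N : ℕ) :
    ∑ m ∈ range (N + 1), (-1) ^ m * (N.choose m : R) *
      ∑ j ∈ range (m + 1), (-1) ^ j * (m.choose j : R) * g j = g N := by
  have hΔ : ∀ m, (-1) ^ m * ∑ j ∈ range (m + 1), (-1) ^ j * (m.choose j : R) * g j =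
      (fwdDiff 1)^[m] g 0 := by
    intro m
    rw [fwdDiff_iter_eq_sum_shift, mul_sum]
    refine sum_congr rfl fun j hj => ?_
    obtain ⟨d, rfl⟩ := Nat.exists_eq_add_of_le (Nat.lt_succ_iff.mp (mem_range.mp hj))
    simp only [zsmul_eq_mul, smul_eq_mul, zero_add, mul_one, Nat.add_sub_cancel_left]
    push_cast
    ring_nf
    rw [pow_mul', neg_one_sq, one_pow, mul_one]
  calc _ = ∑ m ∈ range (N + 1), N.choose m • (fwdDiff 1)^[m] g 0 :=
        sum_congr rfl fun m _ => by rw [← hΔ, nsmul_eq_mul]; ring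
    _ = g N := by rw [← shift_eq_sum_fwdDiff_iter]; simp

theorem sum_div_factorial_binomial_inversion {K : Type*} [Field K] [CharZero K]
    (g : ℕ → K) (N : ℕ) :
    ∑ m ∈ range (N + 1), (-1) ^ m / m.factorial *
      (∑ j ∈ range (m + 1), (-1) ^ j * (m.choose j : K) * g j) / (N - m).factorial =
      g N / N.factorial := by
  rw [eq_div_iff (Nat.cast_ne_zero.mpr N.factorial_ne_zero), sum_mul, ← binomial_inversion g N]
  refine sum_congr rfl fun m hm => ?_
  rw [Nat.cast_choose K (Nat.lt_succ_iff.mp (mem_range.mp hm))]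
  field_simp

theorem sum_mul_sum_div_factorial_comm {K : Type*} [Field K] (c a : ℕ → K) (n : ℕ) :
    ∑ m ∈ range (n + 1), c m * ∑ k ∈ range (n - m + 1), a k / (n - m - k).factorial =
      ∑ k ∈ range (n + 1), a k * ∑ m ∈ range (n - k + 1), c m / (n - k - m).factorial := by
  simp only [mul_sum]
  rw [sum_comm' (t' := range (n + 1)) (s' := fun k => range (n - k + 1))
    (fun m k => by simp only [mem_range]; omega)]
  refine sum_congr rfl fun k _ => sum_congr rfl fun m _ => ?_
  rw [Nat.sub_right_comm]
  ring

section Hessenberg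

variable {R : Type*} [CommRing R]

def lowerHessenberg (g : ℕ → ℕ → R) (n : ℕ) : Matrix (Fin n) (Fin n) R :=
  Matrix.of fun i j => if (j : ℕ) = i + 1 then 1 else if (i : ℕ) + 1 < j then 0
    else g (n - j) (i - j)

theorem Fin.val_succAbove {n : ℕ} (p : Fin (n + 1)) (r : Fin n) :
    (p.succAbove r : ℕ) = if (r : ℕ) < p then (r : ℕ) else (r : ℕ) + 1 := by
  simp only [Fin.succAbove]
  split_ifs <;> simp_all [Fin.lt_def]

/-- Deleting row `i` and column `0` leaves a block lower triangular matrix whose diagonal blocks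
are unitriangular of size `i` and `lowerHessenberg g (n - i)`. -/
theorem det_lowerHessenberg_submatrix_succAbove_succ (g : ℕ → ℕ → R) (n : ℕ) (i : Fin (n + 1)) :
    ((lowerHessenberg g (n + 1)).submatrix i.succAbove Fin.succ).det =
      (lowerHessenberg g (n - i)).det := by
  obtain ⟨k, hk⟩ := i
  have hkn : k ≤ n := Nat.lt_succ_iff.mp hk
  let e : Fin k ⊕ Fin (n - k) ≃ Fin n := finSumFinEquiv.trans (finCongr (by omega))
  let A : Matrix (Fin k) (Fin k) R := Matrix.of fun r c =>
    if (c : ℕ) = r then 1 else if (r : ℕ) < c then 0 else g (n - c) (r - c - 1)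
  let C : Matrix (Fin (n - k)) (Fin k) R := Matrix.of fun r c => g (n - c) (k + r - c)
  have hblocks : ((lowerHessenberg g (n + 1)).submatrix (Fin.succAbove ⟨k, hk⟩) Fin.succ).submatrix
      e e = Matrix.fromBlocks A 0 C (lowerHessenberg g (n - k)) := by
    ext (r | r) (c | c) <;>
      simp only [Matrix.submatrix_apply, Matrix.fromBlocks_apply₁₁, Matrix.fromBlocks_apply₁₂,
        Matrix.fromBlocks_apply₂₁, Matrix.fromBlocks_apply₂₂, lowerHessenberg, Matrix.of_apply,
        Matrix.zero_apply, A, C, Fin.val_succ, Fin.val_succAbove, e, Equiv.trans_apply,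
        finSumFinEquiv_apply_left, finSumFinEquiv_apply_right, finCongr_apply, Fin.val_cast,
        Fin.val_castAdd, Fin.val_natAdd] <;>
      have := r.isLt <;> have := c.isLt <;>
      split_ifs <;> first | rfl | omega | (congr 1 <;> omega)
  have hA : A.det = 1 := by
    rw [Matrix.det_of_isLowerTriangular A fun r c (h : r < c) => by
      simp only [A, Matrix.of_apply]
      rw [if_neg (Fin.val_ne_of_ne h.ne'), if_pos (Fin.lt_def.mp h)]]
    simp [A]
  rw [← Matrix.det_submatrix_equiv_self e, hblocks, Matrix.det_fromBlocks_zero₁₂, hA, one_mul]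

theorem det_lowerHessenberg_succ (g : ℕ → ℕ → R) (n : ℕ) :
    (lowerHessenberg g (n + 1)).det =
      ∑ i ∈ range (n + 1), (-1) ^ i * g (n + 1) i * (lowerHessenberg g (n - i)).det := by
  rw [Matrix.det_succ_column_zero, ← Fin.sum_univ_eq_sum_range]
  refine sum_congr rfl fun i _ => ?_
  rw [det_lowerHessenberg_submatrix_succAbove_succ]
  simp [lowerHessenberg]

theorem det_lowerHessenberg_eq_of_recurrence (g : ℕ → ℕ → R) (L : ℕ → R) (h0 : L 0 = 1)
    (hrec : ∀ n, L (n + 1) = ∑ i ∈ range (n + 1), (-1) ^ i * g (n + 1) i * L (n - i)) (n : ℕ) :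
    (lowerHessenberg g n).det = L n := by
  induction n using Nat.strong_induction_on with
  | _ n ih =>
    match n with
    | 0 => rw [h0, Matrix.det_fin_zero]
    | n + 1 =>
      rw [det_lowerHessenberg_succ, hrec]
      exact sum_congr rfl fun i hi => by rw [ih (n - i) (by omega)]

end Hessenberg

theorem Complex.Gamma_add_one_eq_descPochhammer_mul (w : ℂ) (r : ℕ)
    (hw : ∀ k : ℕ, w - r + 1 ≠ -k) :
    Complex.Gamma (w + 1) = (descPochhammer ℂ r).eval w * Complex.Gamma (w - r + 1) := by
  rw [descPochhammer_eval_eq_ascPochhammer, ← Complex.Gamma_add_nat_div_Gamma_eq _ hw,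
    div_mul_cancel₀ _ (Complex.Gamma_ne_zero hw), sub_add_eq_add_sub, sub_add_cancel]

section Laguerre

variable (α : ℕ) (β : ℂ)

noncomputable def laguerreGamma (j : ℕ) : ℂ := Complex.Gamma (α * j + β + 1)

noncomputable def laguerreFalling (x : ℂ) : ℂ := ∏ i ∈ range α, ((α : ℂ) * x + β - i)

noncomputable def laguerreCoeff (z : ℂ) (k : ℕ) : ℂ :=
  (-z) ^ k / (k.factorial * laguerreGamma α β k)

noncomputable def genLaguerreNormalized (z : ℂ) (p : ℕ) : ℂ :=
  ∑ k ∈ range (p + 1), laguerreCoeff α β z k / (p - k).factorial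

noncomputable def laguerreEntry (z : ℂ) (n d : ℕ) : ℂ :=
  if d = 0 then Bnm α β n 1 - z / n else Bnm α β n (d + 1)

variable {β}

theorem re_laguerreGamma_arg_pos (hβ : -1 < β.re) (j : ℕ) : 0 < ((α : ℂ) * j + β + 1).re := by
  simp only [Complex.add_re, Complex.mul_re, Complex.natCast_re, Complex.natCast_im, mul_zero,
    sub_zero, Complex.one_re]
  nlinarith [Nat.cast_nonneg (α := ℝ) α, Nat.cast_nonneg (α := ℝ) j]

theorem laguerreGamma_ne_zero (hβ : -1 < β.re) (j : ℕ) : laguerreGamma α β j ≠ 0 :=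
  Complex.Gamma_ne_zero_of_re_pos (re_laguerreGamma_arg_pos α hβ j)

theorem prod_mul_laguerreGamma_sub (hβ : -1 < β.re) {s q : ℕ} (hsq : s ≤ q) :
    (∏ i ∈ range (s * α), ((α : ℂ) * q + β - i)) * laguerreGamma α β (q - s) =
      laguerreGamma α β q := by
  have harg : (α : ℂ) * q + β - ((s * α : ℕ) : ℂ) + 1 = α * ((q - s : ℕ) : ℂ) + β + 1 := by
    push_cast [hsq]
    ring
  have hw : ∀ k : ℕ, (α : ℂ) * q + β - ((s * α : ℕ) : ℂ) + 1 ≠ -k := fun k hk => by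
    have := re_laguerreGamma_arg_pos α hβ (q - s)
    rw [← harg, hk] at this
    simp only [Complex.neg_re, Complex.natCast_re, Left.neg_pos_iff] at this
    linarith [Nat.cast_nonneg (α := ℝ) k]
  rw [← descPochhammer_eval_eq_prod_range, laguerreGamma, laguerreGamma, harg.symm,
    ← Complex.Gamma_add_one_eq_descPochhammer_mul _ _ hw]

theorem laguerreGamma_succ (hβ : -1 < β.re) (k : ℕ) :
    laguerreGamma α β (k + 1) = laguerreFalling α β (k + 1) * laguerreGamma α β k := by
  have := prod_mul_laguerreGamma_sub α hβ (Nat.le_add_left 1 k)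
  rw [one_mul, Nat.add_sub_cancel] at this
  rw [← this, laguerreFalling]
  push_cast
  rfl

theorem Bnm_mul_laguerreGamma (hβ : -1 < β.re) {n m : ℕ} (hm : 1 ≤ m) (hmn : m ≤ n) :
    Bnm α β n m * laguerreGamma α β (n - m) = laguerreGamma α β (n - 1) * Cnm α β n m := by
  have := prod_mul_laguerreGamma_sub α hβ (Nat.sub_le_sub_right hmn 1)
  rw [Nat.sub_sub_sub_cancel_right hm, Nat.cast_sub (hm.trans hmn), Nat.cast_one] at this
  rw [Bnm, mul_right_comm, this, mul_comm]

theorem genLaguerre_eq_laguerreGamma_mul (p : ℕ) (z : ℂ) :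
    genLaguerre α β p z = laguerreGamma α β p * genLaguerreNormalized α β z p := by
  rw [genLaguerre, genLaguerreNormalized, mul_sum, mul_sum]
  refine sum_congr rfl fun k hk => ?_
  have hkp : k ≤ p := Nat.lt_succ_iff.mp (mem_range.mp hk)
  have hprod : ∏ i ∈ range k, (-(p : ℂ) + i) = (-1) ^ k * p.descFactorial k := by
    calc ∏ i ∈ range k, (-(p : ℂ) + i) = ∏ i ∈ range k, (-1) * ((p : ℂ) - i) :=
          prod_congr rfl fun _ _ => by ring
      _ = (-1) ^ k * p.descFactorial k := by
          rw [prod_mul_distrib, prod_const, card_range, ← descPochhammer_eval_eq_prod_range,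
            descPochhammer_eval_eq_descFactorial]
  have hfact : ((p - k).factorial : ℂ) * p.descFactorial k = p.factorial := by
    exact_mod_cast Nat.factorial_mul_descFactorial hkp
  have hpk : ((p - k).factorial : ℂ) ≠ 0 := Nat.cast_ne_zero.mpr (Nat.factorial_ne_zero _)
  have hD : (p.descFactorial k : ℂ) ≠ 0 :=
    Nat.cast_ne_zero.mpr (Nat.descFactorial_eq_zero_iff_lt.not.mpr (Nat.not_lt.mpr hkp))
  simp only [hprod, laguerreCoeff, laguerreGamma, neg_pow z, ← hfact]
  field_simp

theorem laguerreCoeff_succ_mul (hβ : -1 < β.re) (z : ℂ) (k : ℕ) :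
    laguerreCoeff α β z (k + 1) * ((k + 1 : ℂ) * laguerreFalling α β (k + 1)) =
      -z * laguerreCoeff α β z k := by
  have hΓ := laguerreGamma_ne_zero α hβ k
  have hblock : laguerreFalling α β (k + 1) ≠ 0 := fun h => by
    simpa [laguerreGamma_succ α hβ, h] using laguerreGamma_ne_zero α hβ (k + 1)
  rw [laguerreCoeff, laguerreCoeff, laguerreGamma_succ α hβ, Nat.factorial_succ]
  push_cast
  field_simp
  ring

theorem sum_Cnm_mul_genLaguerreNormalized (hβ : -1 < β.re) (z : ℂ) {n : ℕ} (hn : 1 ≤ n) :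
    ∑ m ∈ range (n + 1), (-1) ^ m * Cnm α β n m * genLaguerreNormalized α β z (n - m) =
      -(z / n) * genLaguerreNormalized α β z (n - 1) := by
  suffices h : ∑ m ∈ range (n + 1), (-1) ^ m / m.factorial *
      (∑ j ∈ range (m + 1), (-1) ^ j * (m.choose j : ℂ) *
        (((n : ℂ) - j) * laguerreFalling α β (n - j))) * genLaguerreNormalized α β z (n - m) =
      -z * genLaguerreNormalized α β z (n - 1) by
    rw [show -(z / n) * genLaguerreNormalized α β z (n - 1) =
      (n : ℂ)⁻¹ * (-z * genLaguerreNormalized α β z (n - 1)) by ring, ← h, mul_sum]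
    refine sum_congr rfl fun m _ => ?_
    simp only [Cnm, laguerreFalling, mul_assoc]
    ring
  simp only [genLaguerreNormalized]
  rw [sum_mul_sum_div_factorial_comm]
  simp only [sum_div_factorial_binomial_inversion]
  obtain ⟨n, rfl⟩ := Nat.exists_eq_add_of_le' hn
  rw [sum_range_succ', Nat.add_sub_cancel, mul_sum]
  refine (add_eq_left.mpr (by simp)).trans (sum_congr rfl fun k hk => ?_)
  have hk : k ≤ n := Nat.lt_succ_iff.mp (mem_range.mp hk)
  have hcast : ((n + 1 : ℕ) : ℂ) - ((n + 1 - (k + 1) : ℕ) : ℂ) = k + 1 := by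
    rw [Nat.cast_sub (by omega)]
    push_cast
    ring
  rw [hcast, Nat.add_sub_add_right, ← mul_div_assoc, laguerreCoeff_succ_mul α hβ, mul_div_assoc]

theorem genLaguerre_eq_sum_Bnm (hβ : -1 < β.re) (z : ℂ) {n : ℕ} (hn : 1 ≤ n) :
    genLaguerre α β n z =
      ∑ i ∈ range n, (-1) ^ i * Bnm α β n (i + 1) * genLaguerre α β (n - 1 - i) z -
        z / n * genLaguerre α β (n - 1) z := by
  have hnorm := sum_Cnm_mul_genLaguerreNormalized α hβ z hn
  rw [sum_range_succ'] at hnorm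
  have hterm : ∀ i ∈ range n, (-1) ^ i * Bnm α β n (i + 1) * genLaguerre α β (n - 1 - i) z =
      -(laguerreGamma α β (n - 1) * ((-1) ^ (i + 1) * Cnm α β n (i + 1) *
        genLaguerreNormalized α β z (n - (i + 1)))) := by
    intro i hi
    rw [genLaguerre_eq_laguerreGamma_mul, Nat.sub_sub, add_comm 1 i, mul_assoc,
      ← mul_assoc (Bnm _ _ _ _), Bnm_mul_laguerreGamma α hβ (Nat.le_add_left 1 i) (mem_range.mp hi)]
    ring
  have hC0 : Cnm α β n 0 = laguerreFalling α β n := by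
    have hnz : (n : ℂ) ≠ 0 := Nat.cast_ne_zero.mpr (by omega)
    simp [Cnm, laguerreFalling, hnz]
  have hΓ : laguerreGamma α β n = laguerreFalling α β n * laguerreGamma α β (n - 1) := by
    obtain ⟨n, rfl⟩ := Nat.exists_eq_add_of_le' hn
    simpa using laguerreGamma_succ α hβ n
  rw [sum_congr rfl hterm, sum_neg_distrib, ← mul_sum, genLaguerre_eq_laguerreGamma_mul,
    genLaguerre_eq_laguerreGamma_mul, hΓ, ← hC0]
  linear_combination laguerreGamma α β (n - 1) * hnorm

theorem genLaguerre_zero (hβ : -1 < β.re) (z : ℂ) : genLaguerre α β 0 z = 1 := by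
  simp [genLaguerre_eq_laguerreGamma_mul, genLaguerreNormalized, laguerreCoeff,
    laguerreGamma_ne_zero α hβ 0]

theorem genLaguerre_succ_eq_sum (hβ : -1 < β.re) (z : ℂ) (m : ℕ) :
    genLaguerre α β (m + 1) z =
      ∑ i ∈ range (m + 1),
        (-1) ^ i * laguerreEntry α β z (m + 1) i * genLaguerre α β (m - i) z := by
  rw [genLaguerre_eq_sum_Bnm α hβ z (Nat.le_add_left 1 m), sum_range_succ', sum_range_succ']
  simp only [laguerreEntry, Nat.add_sub_cancel, Nat.sub_zero, if_true, Nat.add_one_ne_zero,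
    if_false, pow_zero, one_mul]
  push_cast
  ring

end Laguerre

/-- Rows and columns `i, j : Fin n` are the paper's 1-indexed `i + 1, j + 1`. -/
theorem genLaguerre_det_general (α : ℕ) (β : ℂ) (hβ : -1 < β.re) (z : ℂ)
    (n : ℕ) :
    genLaguerre α β n z =
      Matrix.det (Matrix.of fun i j : Fin n =>
        if (j : ℕ) = (i : ℕ) + 1 then (1 : ℂ)
        else if (i : ℕ) + 1 < (j : ℕ) then 0
        else if (i : ℕ) = (j : ℕ) then
          Bnm α β (n - (i : ℕ)) 1 - z / ((n : ℂ) - (i : ℕ))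
        else Bnm α β (n - (j : ℕ)) ((i : ℕ) - (j : ℕ) + 1)) := by
  rw [← det_lowerHessenberg_eq_of_recurrence (laguerreEntry α β z) (genLaguerre α β · z)
    (genLaguerre_zero α hβ z) (genLaguerre_succ_eq_sum α hβ z) n]
  congr 1
  ext i j
  simp only [lowerHessenberg, laguerreEntry, Matrix.of_apply]
  split_ifs <;> first | rfl | omega | (rename_i hij; rw [hij, Nat.cast_sub j.isLt.le])

/-- Hessenberg determinant expression of `L_n^{(α,β)}(z)`.  The matrix is indexed by
`Fin n`; row/column `i, j : Fin n` correspond to the 1-indexed `(i+1, j+1)` entries. -/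
theorem genLaguerre_det (α : ℕ) (hα : 0 < α) (β : ℂ) (hβ : -1 < β.re) (z : ℂ)
    (n : ℕ) (hn : 1 ≤ n) :
    genLaguerre α β n z =
      Matrix.det (Matrix.of fun i j : Fin n =>
        if (j : ℕ) = (i : ℕ) + 1 then (1 : ℂ)
        else if (i : ℕ) + 1 < (j : ℕ) then 0
        else if (i : ℕ) = (j : ℕ) then
          Bnm α β (n - (i : ℕ)) 1 - z / ((n : ℂ) - (i : ℕ))
        else Bnm α β (n - (j : ℕ)) ((i : ℕ) - (j : ℕ) + 1)) :=
  genLaguerre_det_general α β hβ z n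
end

section
/- Let β ∈ ℂ with Re(β) > −1, z ∈ ℂ, and n ≥ 1 an integer, and take α = 1. Define the n×n tridiagonal-type complex matrix M by: M_{i,i} = B_{n+1−i,1} − z/(n+1−i) for 1 ≤ i ≤ n; M_{i,i+1} = 1 for 1 ≤ i ≤ n−1; M_{i,i−1} = B_{n+2−i,2} for 2 ≤ i ≤ n; and all other entries 0. Then L_n^{(1,β)}(z) = det M. -/
open Finset

/-!
For `α = 1` the Laguerre polynomial is `L_n(z) = Σ_k binom(n+β, n−k) (−z)^k / k!`, and the
coefficients `binom(n+β, n−k)` satisfy Pascal's rule and the absorption identity. Comparing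
coefficients, these give the three-term recurrence
`(n+2) L_{n+2} = (2n+3+β−z) L_{n+1} − (n+1+β) L_n`. Since `B_{m,1} = (2m−1+β)/m` and
`B_{m,2} = (m−1+β)/m`, this is exactly the recurrence obtained by expanding the tridiagonal
determinant along its first row, and both sequences start with `1` and `1+β−z`.
-/

open Polynomial
open scoped Nat

section Tridiagonal

variable {R : Type*} [CommRing R] (d l : ℕ → R)

/-- Entries are indexed by the distance `n - i` to the end, so that deleting the first row and column
of `tridiagMatrix d l (n + 1)` leaves `tridiagMatrix d l n`. -/
def tridiagMatrix (n : ℕ) : Matrix (Fin n) (Fin n) R :=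
  Matrix.of fun i j =>
    if (j : ℕ) = (i : ℕ) + 1 then 1
    else if i = j then d (n - i)
    else if (i : ℕ) = (j : ℕ) + 1 then l (n - i + 1)
    else 0

lemma tridiagMatrix_submatrix_succ (n : ℕ) :
    (tridiagMatrix d l (n + 1)).submatrix Fin.succ Fin.succ = tridiagMatrix d l n := by
  ext i j
  simp [tridiagMatrix, Fin.succ_inj]

lemma det_tridiagMatrix_succ_succ (n : ℕ) :
    (tridiagMatrix d l (n + 2)).det =
      d (n + 2) * (tridiagMatrix d l (n + 1)).det - l (n + 2) * (tridiagMatrix d l n).det := by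
  set T := tridiagMatrix d l (n + 2)
  have hrow : ∀ j : Fin n, T 0 j.succ.succ = 0 := fun j => by
    simp [T, tridiagMatrix, Fin.ext_iff]
  have hcol : ∀ i : Fin n, T i.succ.succ 0 = 0 := fun i => by
    simp [T, tridiagMatrix]
  have hminor :
      (T.submatrix Fin.succ (Fin.succAbove 1)).det = l (n + 2) * (tridiagMatrix d l n).det := by
    rw [Matrix.det_succ_column_zero, Fin.sum_univ_succ,
      sum_eq_zero fun i _ => by simp [hcol i], Fin.succAbove_zero]
    have hsub : (T.submatrix Fin.succ (Fin.succAbove 1)).submatrix Fin.succ Fin.succ =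
        (T.submatrix Fin.succ Fin.succ).submatrix Fin.succ Fin.succ := by
      ext i j
      simp [Fin.succAbove_of_le_castSucc, Fin.le_def]
    rw [hsub, tridiagMatrix_submatrix_succ, tridiagMatrix_submatrix_succ]
    simp [T, tridiagMatrix]
  rw [Matrix.det_succ_row_zero, Fin.sum_univ_succ, Fin.sum_univ_succ,
    sum_eq_zero fun j _ => by rw [hrow j, mul_zero, zero_mul], Fin.succAbove_zero,
    tridiagMatrix_submatrix_succ, Fin.succ_zero_eq_one, hminor]
  simp [T, tridiagMatrix]
  ring

lemma det_tridiagMatrix_eq_of_recurrence (p : ℕ → R) (h₀ : p 0 = 1) (h₁ : p 1 = d 1)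
    (hrec : ∀ n, p (n + 2) = d (n + 2) * p (n + 1) - l (n + 2) * p n) (n : ℕ) :
    (tridiagMatrix d l n).det = p n := by
  induction n using Nat.twoStepInduction with
  | zero => rw [h₀, Matrix.det_isEmpty]
  | one => rw [h₁, Matrix.det_unique]; simp [tridiagMatrix]
  | more n ih₀ ih₁ => rw [det_tridiagMatrix_succ_succ, ih₀, ih₁, hrec]

end Tridiagonal

section LaguerreCoefficients

variable {K : Type*} [Field K] (β : K)

/-- `binom(n+β, n−k) = (β+k+1)⋯(β+n) / (n−k)!`, and `0` for `k > n`. -/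
noncomputable def laguerreBinom (n k : ℕ) : K :=
  if k ≤ n then (ascPochhammer K (n - k)).eval (β + k + 1) / (n - k)! else 0

lemma laguerreBinom_self (n : ℕ) : laguerreBinom β n n = 1 := by
  simp [laguerreBinom]

lemma laguerreBinom_of_lt {n k : ℕ} (h : n < k) : laguerreBinom β n k = 0 := by
  simp [laguerreBinom, Nat.not_le.mpr h]

lemma laguerreBinom_add (k m : ℕ) :
    laguerreBinom β (k + m) k = (ascPochhammer K m).eval (β + k + 1) / m ! := by
  simp [laguerreBinom]

noncomputable def laguerrePoly (n : ℕ) : K[X] :=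
  ∑ k ∈ range (n + 1), C (laguerreBinom β n k * (-1) ^ k / k !) * X ^ k

lemma coeff_laguerrePoly (n k : ℕ) :
    (laguerrePoly β n).coeff k = laguerreBinom β n k * (-1) ^ k / k ! := by
  simp only [laguerrePoly, finsetSum_coeff, coeff_C_mul_X_pow, sum_ite_eq, mem_range]
  split_ifs with hk
  · rfl
  · rw [laguerreBinom_of_lt β (by omega), zero_mul, zero_div]

variable [CharZero K]

lemma laguerreBinom_succ_succ (n k : ℕ) :
    laguerreBinom β (n + 1) (k + 1) = laguerreBinom β n (k + 1) + laguerreBinom β n k := by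
  rcases lt_trichotomy k n with hlt | rfl | hgt
  · obtain ⟨m, rfl⟩ := Nat.exists_eq_add_of_lt hlt
    rw [show k + m + 1 + 1 = (k + 1) + (m + 1) by ring, show k + m + 1 = (k + 1) + m by ring,
      laguerreBinom_add, laguerreBinom_add, show k + 1 + m = k + (m + 1) by ring, laguerreBinom_add]
    rw [ascPochhammer_succ_eval, ascPochhammer_succ_left, eval_mul, eval_comp, eval_X, eval_add,
      eval_X, eval_one, Nat.factorial_succ, show β + ((k + 1 : ℕ) : K) + 1 = β + k + 1 + 1 by
      push_cast; ring]
    push_cast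
    field_simp
    ring
  · rw [laguerreBinom_self, laguerreBinom_self, laguerreBinom_of_lt β (lt_add_one k), zero_add]
  · rw [laguerreBinom_of_lt β (by omega), laguerreBinom_of_lt β (by omega),
      laguerreBinom_of_lt β hgt, add_zero]

lemma sub_mul_laguerreBinom_succ (n k : ℕ) :
    ((n : K) + 1 - k) * laguerreBinom β (n + 1) k = (n + 1 + β) * laguerreBinom β n k := by
  rcases le_or_gt k n with hle | hgt
  · obtain ⟨m, rfl⟩ := Nat.exists_eq_add_of_le hle
    rw [show k + m + 1 = k + (m + 1) by ring, laguerreBinom_add, laguerreBinom_add,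
      ascPochhammer_succ_eval, Nat.factorial_succ]
    push_cast
    field_simp
    ring
  · rw [laguerreBinom_of_lt β hgt]
    rcases eq_or_lt_of_le (Nat.succ_le_of_lt hgt) with rfl | hgt'
    · push_cast; ring
    · rw [laguerreBinom_of_lt β hgt', mul_zero, mul_zero]

lemma laguerrePoly_recurrence (n : ℕ) :
    C ((n : K) + 2) * laguerrePoly β (n + 2) =
      (C (2 * n + 3 + β) - X) * laguerrePoly β (n + 1) - C (n + 1 + β) * laguerrePoly β n := by
  ext k
  rw [sub_mul, coeff_sub, coeff_sub, coeff_C_mul, coeff_C_mul, coeff_C_mul]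
  cases k with
  | zero =>
    have absorb₁ := sub_mul_laguerreBinom_succ β (n + 1) 0
    have absorb₀ := sub_mul_laguerreBinom_succ β n 0
    simp only [coeff_X_mul_zero, coeff_laguerrePoly, pow_zero, Nat.factorial_zero, Nat.cast_one,
      mul_one, div_one, Nat.cast_zero, sub_zero, Nat.cast_add] at absorb₁ absorb₀ ⊢
    linear_combination absorb₁ - absorb₀
  | succ k =>
    have absorb₁ := sub_mul_laguerreBinom_succ β (n + 1) (k + 1)
    have absorb₀ := sub_mul_laguerreBinom_succ β n (k + 1)
    push_cast at absorb₁ absorb₀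
    have hcoeff : ((n : K) + 2) * laguerreBinom β (n + 2) (k + 1) =
        (2 * n + 3 + β) * laguerreBinom β (n + 1) (k + 1) + (k + 1) * laguerreBinom β (n + 1) k
          - (n + 1 + β) * laguerreBinom β n (k + 1) := by
      linear_combination (k + 1) * laguerreBinom_succ_succ β (n + 1) k + absorb₁ - absorb₀
    rw [coeff_X_mul, coeff_laguerrePoly, coeff_laguerrePoly, coeff_laguerrePoly,
      coeff_laguerrePoly, Nat.factorial_succ, pow_succ]
    push_cast
    field_simp [Nat.factorial_ne_zero]
    linear_combination -hcoeff

end LaguerreCoefficients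

lemma prod_range_neg_natCast_add {R : Type*} [CommRing R] (n k : ℕ) :
    ∏ i ∈ range k, (-(n : R) + i) = (-1) ^ k * n.descFactorial k := by
  rw [← descPochhammer_eval_eq_descFactorial, descPochhammer_eval_eq_prod_range,
    show (-1 : R) ^ k = (-1) ^ #(range k) by rw [card_range], ← prod_neg]
  exact prod_congr rfl fun i _ => by ring

lemma Gamma_add_nat_eq_mul_ascPochhammer {s : ℂ} (hs : ∀ j : ℕ, s ≠ -j) (m : ℕ) :
    Complex.Gamma (s + m) = Complex.Gamma s * (ascPochhammer ℂ m).eval s := by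
  rw [← Complex.Gamma_add_nat_div_Gamma_eq s hs, mul_div_cancel₀ _ (Complex.Gamma_ne_zero hs)]

lemma genLaguerre_one_eq_eval_laguerrePoly (β : ℂ) (hβ : -1 < β.re) (n : ℕ) (z : ℂ) :
    genLaguerre 1 β n z = (laguerrePoly β n).eval z := by
  rw [genLaguerre, laguerrePoly, eval_finsetSum, mul_sum]
  refine sum_congr rfl fun k hk => ?_
  obtain ⟨m, rfl⟩ := Nat.exists_eq_add_of_le (mem_range_succ_iff.mp hk)
  have hpos : 0 < (β + k + 1).re := by
    simp only [Complex.add_re, Complex.natCast_re, Complex.one_re]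
    linarith [(k.cast_nonneg : (0 : ℝ) ≤ k)]
  have hpole : ∀ j : ℕ, β + k + 1 ≠ -j := fun j h => by
    rw [h, Complex.neg_re, Complex.natCast_re] at hpos
    linarith [(j.cast_nonneg : (0 : ℝ) ≤ j)]
  have hfact : ((k + m).descFactorial k : ℂ) * m ! = (k + m)! := by
    rw [← Nat.factorial_mul_descFactorial (Nat.le_add_right k m), Nat.add_sub_cancel_left,
      Nat.cast_mul, mul_comm]
  rw [show ((1 : ℕ) : ℂ) * (k + m : ℕ) + β + 1 = β + k + 1 + m by push_cast; ring,
    show ((1 : ℕ) : ℂ) * k + β + 1 = β + k + 1 by push_cast; ring,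
    Gamma_add_nat_eq_mul_ascPochhammer hpole, prod_range_neg_natCast_add, ← hfact,
    eval_mul, eval_C, eval_pow, eval_X, laguerreBinom_add]
  field_simp [Complex.Gamma_ne_zero hpole, Nat.factorial_ne_zero, Nat.descFactorial_eq_zero_iff_lt]

lemma Bnm_one_one (β : ℂ) (m : ℕ) : Bnm 1 β m 1 = (2 * m - 1 + β) / m := by
  simp [Bnm, Cnm, sum_range_succ]
  ring

lemma Bnm_one_two (β : ℂ) (m : ℕ) : Bnm 1 β m 2 = (m - 1 + β) / m := by
  simp [Bnm, Cnm, sum_range_succ]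
  ring

/-- The entries `i, j : Fin n` correspond to the 1-indexed entries `(i+1, j+1)` of the paper. -/
theorem classicalLaguerre_det_general (β : ℂ) (hβ : -1 < β.re) (z : ℂ)
    (n : ℕ) :
    genLaguerre 1 β n z =
      Matrix.det (Matrix.of fun i j : Fin n =>
        if (j : ℕ) = (i : ℕ) + 1 then (1 : ℂ)
        else if (i : ℕ) = (j : ℕ) then
          Bnm 1 β (n - (i : ℕ)) 1 - z / ((n : ℂ) - (i : ℕ))
        else if (i : ℕ) = (j : ℕ) + 1 then Bnm 1 β (n - (i : ℕ) + 1) 2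
        else 0) := by
  rw [genLaguerre_one_eq_eval_laguerrePoly β hβ, ← det_tridiagMatrix_eq_of_recurrence
    (fun m => Bnm 1 β m 1 - z / m) (fun m => Bnm 1 β m 2) (fun m => (laguerrePoly β m).eval z)]
  · congr 1
    ext i j
    simp [tridiagMatrix, Fin.ext_iff]
  · simp [laguerrePoly, laguerreBinom]
  · simp [laguerrePoly, laguerreBinom, Bnm_one_one, sum_range_succ]
    ring
  · intro m
    have hrec := congrArg (eval z) (laguerrePoly_recurrence β m)
    simp only [eval_mul, eval_sub, eval_C, eval_X] at hrec
    have hm : (m : ℂ) + 2 ≠ 0 := by exact_mod_cast (m + 1).succ_ne_zero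
    rw [Bnm_one_one, Bnm_one_two]
    push_cast
    field_simp
    linear_combination hrec

/-- Tridiagonal-type determinant expression of `L_n^{(1,β)}(z)`.  The matrix is
indexed by `Fin n`; `i, j : Fin n` correspond to the 1-indexed entries `(i+1, j+1)`. -/
theorem classicalLaguerre_det (β : ℂ) (hβ : -1 < β.re) (z : ℂ)
    (n : ℕ) (hn : 1 ≤ n) :
    genLaguerre 1 β n z =
      Matrix.det (Matrix.of fun i j : Fin n =>
        if (j : ℕ) = (i : ℕ) + 1 then (1 : ℂ)
        else if (i : ℕ) = (j : ℕ) then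
          Bnm 1 β (n - (i : ℕ)) 1 - z / ((n : ℂ) - (i : ℕ))
        else if (i : ℕ) = (j : ℕ) + 1 then Bnm 1 β (n - (i : ℕ) + 1) 2
        else 0) :=
  classicalLaguerre_det_general β hβ z n
end

section
/- Let n ≥ 1 be an integer and let (a_j^{(ℓ)})_{j ≥ 0, ℓ ≥ 1} be an arbitrary family of complex numbers. Define the n×n lower-Hessenberg matrix H by: H_{i,j} = a_{j−1}^{(i−j+1)} for 1 ≤ j ≤ i ≤ n; H_{i,i+1} = 1 for 1 ≤ i ≤ n−1; and H_{i,j} = 0 for j > i+1. Then det H = Σ_{k=1}^{n} (−1)^{n−k} Σ_{t_1+⋯+t_k=n, t_1,…,t_k ≥ 1} a_0^{(t_1)} · a_{t_1}^{(t_2)} · a_{t_1+t_2}^{(t_3)} ⋯ a_{t_1+⋯+t_{k−1}}^{(t_k)}, where the inner sum runs over all compositions (t_1,…,t_k) of n into k positive integer parts. -/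
/-!
Expanding along the first column,
`det H_{n+1}(a) = ∑ᵢ (-1)^i a_0^{(i+1)} det H_{n-i}(a')` with `a'_j = a_{j+i+1}`:
deleting row `i` and column `0` leaves a block lower-triangular matrix with a unitriangular
`i × i` leading block. Splitting off the first part `t₁ = i + 1` of a composition shows that the
sum over compositions of `∏ₘ (-1)^{t_m - 1} a_{t_1+⋯+t_{m-1}}^{(t_m)}` obeys the same
recursion, and for a composition of `n` into `k` parts these signs multiply to `(-1)^{n-k}`.
-/

open Finset

section Compositions

def compositions (k n : ℕ) : Finset (Fin k → ℕ) :=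
  (Finset.Nat.antidiagonalTuple k n).filter fun t => ∀ i, 1 ≤ t i

theorem mem_compositions {k n : ℕ} {t : Fin k → ℕ} :
    t ∈ compositions k n ↔ ∑ i, t i = n ∧ ∀ i, 1 ≤ t i := by
  rw [compositions, mem_filter, Finset.Nat.mem_antidiagonalTuple]

theorem compositions_eq_empty {k n : ℕ} (h : n < k) : compositions k n = ∅ := by
  refine eq_empty_of_forall_notMem fun t ht => ?_
  obtain ⟨hsum, hpos⟩ := mem_compositions.1 ht
  have : k ≤ ∑ i, t i := by simpa using sum_le_sum fun i (_ : i ∈ univ) => hpos i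
  omega

theorem compositions_zero_succ (n : ℕ) : compositions 0 (n + 1) = ∅ := by
  simp [compositions]

theorem sum_compositions_succ_succ {M : Type*} [AddCommMonoid M] (k n : ℕ)
    (f : (Fin (k + 1) → ℕ) → M) :
    ∑ t ∈ compositions (k + 1) (n + 1), f t =
      ∑ i ∈ range (n + 1), ∑ s ∈ compositions k (n - i), f (Fin.cons (i + 1) s) := by
  rw [sum_sigma']
  refine sum_nbij' (fun t => ⟨t 0 - 1, Fin.tail t⟩) (fun p => Fin.cons (p.1 + 1) p.2)
    ?_ ?_ ?_ ?_ ?_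
  · intro t ht
    obtain ⟨hsum, hpos⟩ := mem_compositions.1 ht
    rw [Fin.sum_univ_succ] at hsum
    have := hpos 0
    rw [mem_sigma, mem_range, mem_compositions]
    exact ⟨by dsimp only; omega, by simp only [Fin.tail]; omega, fun i => hpos i.succ⟩
  · rintro ⟨i, s⟩ hp
    rw [mem_sigma, mem_range, mem_compositions] at hp
    dsimp only at hp ⊢
    obtain ⟨hi, hsum, hpos⟩ := hp
    refine mem_compositions.2 ⟨?_, Fin.cases (by simp) fun j => by simpa using hpos j⟩
    simp only [Fin.sum_univ_succ, Fin.cons_zero, Fin.cons_succ]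
    omega
  · intro t ht
    have := (mem_compositions.1 ht).2 0
    simp only [Nat.sub_add_cancel this, Fin.cons_self_tail]
  · rintro ⟨i, s⟩ _
    simp
  · intro t ht
    have := (mem_compositions.1 ht).2 0
    simp only [Nat.sub_add_cancel this, Fin.cons_self_tail]

variable {R : Type*} [CommSemiring R]

def compositionWeight {k : ℕ} (b : ℕ → ℕ → R) (t : Fin k → ℕ) : R :=
  ∏ i, b (∑ j ∈ univ.filter (· < i), t j) (t i)

theorem compositionWeight_cons {k : ℕ} (b : ℕ → ℕ → R) (x : ℕ) (s : Fin k → ℕ) :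
    compositionWeight b (Fin.cons x s : Fin (k + 1) → ℕ) =
      b 0 x * compositionWeight (fun j => b (j + x)) s := by
  have hpartial : ∀ i : Fin k,
      ∑ j ∈ univ.filter (· < i.succ), (Fin.cons x s : Fin (k + 1) → ℕ) j =
        ∑ j ∈ univ.filter (· < i), s j + x := by
    intro i
    rw [sum_filter, sum_filter, Fin.sum_univ_succ]
    simp [Fin.succ_lt_succ_iff, add_comm]
  simp [compositionWeight, Fin.prod_univ_succ, hpartial]

def compositionSum (n : ℕ) (b : ℕ → ℕ → R) : R :=
  ∑ k ∈ range (n + 1), ∑ t ∈ compositions k n, compositionWeight b t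

theorem compositionSum_eq_sum_range {n N : ℕ} (hN : n < N) (b : ℕ → ℕ → R) :
    compositionSum n b = ∑ k ∈ range N, ∑ t ∈ compositions k n, compositionWeight b t := by
  refine sum_subset (range_subset_range.2 hN) fun k _ hk => ?_
  rw [compositions_eq_empty (by simpa using hk), sum_empty]

theorem compositionSum_eq_sum_Icc {n : ℕ} (hn : 1 ≤ n) (b : ℕ → ℕ → R) :
    compositionSum n b = ∑ k ∈ Icc 1 n, ∑ t ∈ compositions k n, compositionWeight b t := by
  refine (sum_subset (fun k hk => ?_) fun k hk hk' => ?_).symm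
  · rw [mem_Icc] at hk
    rw [mem_range]
    omega
  · obtain rfl : k = 0 := by
      rw [mem_range] at hk
      rw [mem_Icc] at hk'
      omega
    obtain ⟨m, rfl⟩ := Nat.exists_eq_add_of_le' hn
    rw [compositions_zero_succ, sum_empty]

theorem compositionSum_succ (n : ℕ) (b : ℕ → ℕ → R) :
    compositionSum (n + 1) b =
      ∑ i ∈ range (n + 1), b 0 (i + 1) * compositionSum (n - i) fun j => b (j + (i + 1)) := by
  rw [compositionSum, sum_range_succ', compositions_zero_succ, sum_empty, add_zero]
  simp only [sum_compositions_succ_succ, compositionWeight_cons]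
  rw [sum_comm]
  refine sum_congr rfl fun i _ => ?_
  rw [compositionSum_eq_sum_range (N := n + 1) (by omega)]
  simp only [mul_sum]

end Compositions

section Hessenberg

variable {R : Type*} [CommRing R]

theorem compositionWeight_neg_one_pow_mul {k n : ℕ} {t : Fin k → ℕ}
    (ht : t ∈ compositions k n) (a : ℕ → ℕ → R) :
    compositionWeight (fun j ℓ => (-1) ^ (ℓ - 1) * a j ℓ) t =
      (-1) ^ (n - k) * compositionWeight a t := by
  obtain ⟨hsum, hpos⟩ := mem_compositions.1 ht
  have hexp : ∑ i, (t i - 1) = n - k := by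
    rw [← hsum, sum_tsub_distrib _ fun i _ => hpos i]
    simp
  rw [compositionWeight, compositionWeight, prod_mul_distrib, prod_pow_eq_pow_sum, hexp]

def hessenberg (n : ℕ) (a : ℕ → ℕ → R) : Matrix (Fin n) (Fin n) R :=
  Matrix.of fun i j : Fin n =>
    if (j : ℕ) = (i : ℕ) + 1 then 1
    else if (i : ℕ) + 1 < (j : ℕ) then 0
    else a j (i - j + 1)

theorem hessenberg_submatrix_succ_succ (n : ℕ) (a : ℕ → ℕ → R) :
    (hessenberg (n + 1) a).submatrix Fin.succ Fin.succ = hessenberg n fun j => a (j + 1) := by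
  ext i j
  simp only [hessenberg, Matrix.submatrix_apply, Matrix.of_apply, Fin.val_succ]
  split_ifs <;> first | rfl | omega | congr 1; omega

theorem det_eq_det_submatrix_succ_succ {n : ℕ} (M : Matrix (Fin (n + 1)) (Fin (n + 1)) R)
    (h₀ : M 0 0 = 1) (h : ∀ j : Fin n, M 0 j.succ = 0) :
    M.det = (M.submatrix Fin.succ Fin.succ).det := by
  simp [Matrix.det_succ_row_zero, Fin.sum_univ_succ, h₀, h]

theorem det_hessenberg_submatrix_succAbove_succ (n : ℕ) (a : ℕ → ℕ → R)
    (i : Fin (n + 1)) :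
    ((hessenberg (n + 1) a).submatrix i.succAbove Fin.succ).det =
      (hessenberg (n - i) fun j => a (j + (i + 1))).det := by
  induction n generalizing a with
  | zero => obtain rfl := Fin.fin_one_eq_zero i; simp
  | succ n ih =>
    induction i using Fin.cases with
    | zero => simp [hessenberg_submatrix_succ_succ]
    | succ i =>
      have h₀ : (hessenberg (n + 2) a).submatrix i.succ.succAbove Fin.succ 0 0 = 1 := by
        simp [hessenberg]
      have h : ∀ j : Fin n,
          (hessenberg (n + 2) a).submatrix i.succ.succAbove Fin.succ 0 j.succ = 0 := fun j => by
        simp [hessenberg]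
      have hminor : ((hessenberg (n + 2) a).submatrix i.succ.succAbove Fin.succ).submatrix
          Fin.succ Fin.succ =
            (hessenberg (n + 1) fun j => a (j + 1)).submatrix i.succAbove Fin.succ := by
        rw [← hessenberg_submatrix_succ_succ]
        ext r c
        simp [Fin.succ_succAbove_succ]
      rw [det_eq_det_submatrix_succ_succ _ h₀ h, hminor, ih]
      simp only [Fin.val_succ, add_assoc, one_add_one_eq_two]
      rw [Nat.add_sub_add_right]

theorem det_hessenberg_succ (n : ℕ) (a : ℕ → ℕ → R) :
    (hessenberg (n + 1) a).det =
      ∑ i ∈ range (n + 1),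
        (-1) ^ i * a 0 (i + 1) * (hessenberg (n - i) fun j => a (j + (i + 1))).det := by
  rw [Matrix.det_succ_column_zero, ← Fin.sum_univ_eq_sum_range]
  refine sum_congr rfl fun i _ => ?_
  have hentry : hessenberg (n + 1) a i 0 = a 0 (i + 1) := by
    simp [hessenberg]
  rw [hentry, det_hessenberg_submatrix_succAbove_succ]

theorem det_hessenberg_eq_compositionSum (n : ℕ) (a : ℕ → ℕ → R) :
    (hessenberg n a).det = compositionSum n fun j ℓ => (-1) ^ (ℓ - 1) * a j ℓ := by
  induction n using Nat.strong_induction_on generalizing a with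
  | _ n ih =>
    cases n with
    | zero => simp [compositionSum, compositions, compositionWeight]
    | succ n =>
      rw [det_hessenberg_succ, compositionSum_succ]
      refine sum_congr rfl fun i _ => ?_
      rw [ih (n - i) (by omega), Nat.add_sub_cancel, mul_assoc]

end Hessenberg

/-- Expansion of a lower-Hessenberg determinant with unit superdiagonal as a signed
sum over compositions: the matrix indexed by `Fin n` (with `i, j : Fin n`
corresponding to the 1-indexed entries `(i+1, j+1)`) has entries
`H_{i,j} = a_{j−1}^{(i−j+1)}` for `j ≤ i`, `1` on the superdiagonal and `0` above it;
here `a j ℓ` denotes `a_j^{(ℓ)}`. -/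
theorem hessenberg_det_composition_sum (n : ℕ) (hn : 1 ≤ n) (a : ℕ → ℕ → ℂ) :
    Matrix.det (Matrix.of fun i j : Fin n =>
        if (j : ℕ) = (i : ℕ) + 1 then (1 : ℂ)
        else if (i : ℕ) + 1 < (j : ℕ) then 0
        else a (j : ℕ) ((i : ℕ) - (j : ℕ) + 1)) =
      ∑ k ∈ Icc 1 n, (-1 : ℂ) ^ (n - k) *
        ∑ t ∈ (Finset.Nat.antidiagonalTuple k n).filter (fun t => ∀ i, 1 ≤ t i),
          ∏ i : Fin k, a (∑ j ∈ univ.filter (fun j => j < i), t j) (t i) := by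
  change (hessenberg n a).det = _
  rw [det_hessenberg_eq_compositionSum, compositionSum_eq_sum_Icc hn]
  refine sum_congr rfl fun k _ => ?_
  rw [mul_sum]
  exact sum_congr rfl fun t ht => compositionWeight_neg_one_pow_mul ht a
end

section
/- Let α be a positive integer, β ∈ ℂ with Re(β) > −1, and let n, j be integers with n ≥ 2 and 1 ≤ j ≤ n−1. Then Σ_{m=1}^{n−j} (−1)^{m−1} · C_{n,m}/(n−j−m)! = Γ(αn+β+1)/(Γ(α(n−1)+β+1)·(n−j)!) − j·Γ(αj+β+1)/(n·Γ(α(j−1)+β+1)·(n−j)!). -/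
/-!
The alternating binomial transform `F ↦ (m ↦ ∑ₖ (-1)ᵏ C(m,k) F k)` equals `m ↦ (-1)ᵐ Δᵐ F 0`, so
Newton's forward-difference formula shows it is an involution. As `n · m! · C_{n,m}` is the
transform of `F k = (n - k)(α(n - k) + β)_α`, the sum collapses to
`(F 0 - F (n - j)) / (n · (n - j)!)`, and `Γ(z + 1) = (z)_α Γ(z - α + 1)` turns the two boundary
values into the Gamma quotients.
-/

open Finset

open fwdDiff

theorem neg_one_pow_mul_neg_one_pow {M : Type*} [Monoid M] [HasDistribNeg M] (n : ℕ) :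
    (-1 : M) ^ n * (-1) ^ n = 1 := by
  rw [← pow_add, ← two_mul, pow_mul, neg_one_sq, one_pow]

section BinomialTransform

variable {R : Type*} [CommRing R]

def binomialTransform (F : ℕ → R) (m : ℕ) : R :=
  ∑ k ∈ range (m + 1), (-1) ^ k * m.choose k * F k

@[simp]
theorem binomialTransform_zero (F : ℕ → R) : binomialTransform F 0 = F 0 := by
  simp [binomialTransform]

theorem binomialTransform_eq_neg_one_pow_mul_fwdDiff_iter (F : ℕ → R) (m : ℕ) :
    binomialTransform F m = (-1) ^ m * (Δ_[1])^[m] F 0 := by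
  rw [fwdDiff_iter_eq_sum_shift, mul_sum]
  refine sum_congr rfl fun k hk => ?_
  obtain ⟨d, rfl⟩ := Nat.exists_eq_add_of_le (mem_range_succ_iff.mp hk)
  simp only [Nat.add_sub_cancel_left, zsmul_eq_mul, smul_eq_mul, mul_one, zero_add,
    Int.cast_mul, Int.cast_pow, Int.cast_neg, Int.cast_one, Int.cast_natCast, pow_add]
  linear_combination -(-1) ^ k * (k + d).choose k * F k * neg_one_pow_mul_neg_one_pow (M := R) d

theorem binomialTransform_binomialTransform (F : ℕ → R) :
    binomialTransform (binomialTransform F) = F := by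
  funext N
  have h := shift_eq_sum_fwdDiff_iter 1 F N 0
  rw [zero_add, smul_eq_mul, mul_one] at h
  rw [h]
  refine sum_congr rfl fun m _ => ?_
  rw [binomialTransform_eq_neg_one_pow_mul_fwdDiff_iter, nsmul_eq_mul]
  linear_combination (N.choose m : R) * (Δ_[1])^[m] F 0 * neg_one_pow_mul_neg_one_pow (M := R) m

theorem sum_Icc_neg_one_pow_choose_mul_binomialTransform (F : ℕ → R) (N : ℕ) :
    ∑ m ∈ Icc 1 N, (-1) ^ (m - 1) * N.choose m * binomialTransform F m = F 0 - F N := by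
  have h := congr_fun (binomialTransform_binomialTransform F) N
  rw [binomialTransform, range_eq_Ico, sum_eq_sum_Ico_succ_bot (by omega : 0 < N + 1),
    Ico_add_one_right_eq_Icc] at h
  rw [← h, binomialTransform_zero, pow_zero, Nat.choose_zero_right, Nat.cast_one, one_mul, one_mul,
    sub_add_cancel_left, ← Finset.sum_neg_distrib]
  refine sum_congr rfl fun m hm => ?_
  obtain ⟨d, rfl⟩ := Nat.exists_eq_add_of_le (mem_Icc.mp hm).1
  rw [Nat.add_sub_cancel_left, pow_add]
  ring

end BinomialTransform

theorem sum_Icc_neg_one_pow_mul_binomialTransform_div_factorial {K : Type*} [Field K] [CharZero K]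
    (F : ℕ → K) (N : ℕ) :
    ∑ m ∈ Icc 1 N, (-1) ^ (m - 1) * (binomialTransform F m / m.factorial) /
      (N - m).factorial = (F 0 - F N) / N.factorial := by
  rw [← sum_Icc_neg_one_pow_choose_mul_binomialTransform, sum_div]
  refine sum_congr rfl fun m hm => ?_
  have hN : (N.factorial : K) ≠ 0 := Nat.cast_ne_zero.2 N.factorial_ne_zero
  rw [Nat.cast_choose K (mem_Icc.mp hm).2]
  field_simp

theorem Complex.Gamma_add_one_eq_prod_mul_Gamma {w : ℂ} {k : ℕ}
    (hw : Complex.Gamma (w - k + 1) ≠ 0) :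
    Complex.Gamma (w + 1) = (∏ i ∈ range k, (w - i)) * Complex.Gamma (w - k + 1) := by
  have h := Complex.Gamma_add_nat_div_Gamma_eq (n := k) (w - k + 1)
    fun m hm => hw ((Complex.Gamma_eq_zero_iff _).2 ⟨m, hm⟩)
  rw [← descPochhammer_eval_eq_ascPochhammer, descPochhammer_eval_eq_prod_range,
    div_eq_iff hw, show w - k + 1 + k = w + 1 by ring] at h
  exact h

theorem Complex.Gamma_mul_add_one_eq_prod_mul_Gamma (α : ℕ) {β x : ℂ}
    (h : Complex.Gamma (α * (x - 1) + β + 1) ≠ 0) :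
    Complex.Gamma (α * x + β + 1) =
      (∏ i ∈ range α, ((α : ℂ) * x + β - i)) * Complex.Gamma (α * (x - 1) + β + 1) := by
  rw [show (α : ℂ) * (x - 1) + β + 1 = α * x + β - α + 1 by ring] at h ⊢
  exact Complex.Gamma_add_one_eq_prod_mul_Gamma h

theorem Cnm_sum_identity_general (α : ℕ) (β : ℂ) (hβ : -1 < β.re)
    (n j : ℕ) (hj1 : 1 ≤ j) (hj2 : j ≤ n - 1) :
    ∑ m ∈ Icc 1 (n - j), (-1 : ℂ) ^ (m - 1) * Cnm α β n m / ((n - j - m).factorial : ℂ) =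
      Complex.Gamma ((α : ℂ) * n + β + 1) /
        (Complex.Gamma ((α : ℂ) * ((n : ℂ) - 1) + β + 1) * ((n - j).factorial : ℂ)) -
      (j : ℂ) * Complex.Gamma ((α : ℂ) * j + β + 1) /
        ((n : ℂ) * Complex.Gamma ((α : ℂ) * ((j : ℂ) - 1) + β + 1) *
          ((n - j).factorial : ℂ)) := by
  have hjn : j ≤ n := by omega
  have hn : (n : ℂ) ≠ 0 := Nat.cast_ne_zero.2 (by omega)
  set F : ℕ → ℂ := fun k => ((n : ℂ) - k) / n * ∏ i ∈ range α, ((α : ℂ) * (n - k) + β - i)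
  have hC (m : ℕ) : Cnm α β n m = binomialTransform F m / m.factorial := by
    simp only [Cnm, binomialTransform, F, mul_sum, sum_div]
    refine sum_congr rfl fun k _ => ?_
    ring
  have hF0 : F 0 = ∏ i ∈ range α, ((α : ℂ) * n + β - i) := by simp [F, hn]
  have hFj : F (n - j) = j / n * ∏ i ∈ range α, ((α : ℂ) * j + β - i) := by
    simp only [F, Nat.cast_sub hjn, sub_sub_cancel]
  have hΓ (x : ℕ) (hx : 1 ≤ x) : Complex.Gamma (α * ((x : ℂ) - 1) + β + 1) ≠ 0 := by
    refine Complex.Gamma_ne_zero_of_re_pos ?_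
    have : (1 : ℝ) ≤ x := by exact_mod_cast hx
    simp only [Complex.add_re, Complex.mul_re, Complex.sub_re, Complex.natCast_re,
      Complex.natCast_im, Complex.one_re, sub_zero, zero_mul]
    nlinarith [(α.cast_nonneg : (0 : ℝ) ≤ α)]
  have hΓn := hΓ n (by omega)
  have hΓj := hΓ j hj1
  simp_rw [hC]
  rw [sum_Icc_neg_one_pow_mul_binomialTransform_div_factorial, hF0, hFj,
    Complex.Gamma_mul_add_one_eq_prod_mul_Gamma α hΓn,
    Complex.Gamma_mul_add_one_eq_prod_mul_Gamma α hΓj]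
  field_simp

/-- Key summation identity for the `C_{n,m}`:
`Σ_{m=1}^{n−j} (−1)^{m−1} C_{n,m}/(n−j−m)!
  = Γ(αn+β+1)/(Γ(α(n−1)+β+1)·(n−j)!) − j·Γ(αj+β+1)/(n·Γ(α(j−1)+β+1)·(n−j)!)`. -/
theorem Cnm_sum_identity (α : ℕ) (hα : 0 < α) (β : ℂ) (hβ : -1 < β.re)
    (n j : ℕ) (hn : 2 ≤ n) (hj1 : 1 ≤ j) (hj2 : j ≤ n - 1) :
    ∑ m ∈ Icc 1 (n - j), (-1 : ℂ) ^ (m - 1) * Cnm α β n m / ((n - j - m).factorial : ℂ) =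
      Complex.Gamma ((α : ℂ) * n + β + 1) /
        (Complex.Gamma ((α : ℂ) * ((n : ℂ) - 1) + β + 1) * ((n - j).factorial : ℂ)) -
      (j : ℂ) * Complex.Gamma ((α : ℂ) * j + β + 1) /
        ((n : ℂ) * Complex.Gamma ((α : ℂ) * ((j : ℂ) - 1) + β + 1) *
          ((n - j).factorial : ℂ)) :=
  Cnm_sum_identity_general α β hβ n j hj1 hj2
end
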